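/- arXiv:1707.09938 — 6 statements merged into one kernel-verified Lean document; each statement's English description precedes it below -/
import Mathlib

section
/- (Krasnoselskii–Mann algorithm) Let H be a real Hilbert space, let D be a nonempty closed convex subset of H, and let T : D → D be a non-expansive operator whose fixed-point set Fix T = {x ∈ D : T(x) = x} is nonempty. Let (λ_k)_{k≥1} be a sequence in [0,1] with Σ_{k=1}^∞ λ_k(1−λ_k) = +∞, and let f₀ ∈ D. Then the sequence defined by f_{k+1} = f_k + λ_k (T(f_k) − f_k) converges weakly to a point in Fix T. -/
/-!
The iterates are Fejér monotone with respect to `Fix T`: for every fixed point `p`,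
`‖f (k+1) - p‖² + λ_k (1 - λ_k) ‖T f_k - f_k‖² ≤ ‖f_k - p‖²`. Telescoping makes
`∑ λ_k (1 - λ_k) ‖T f_k - f_k‖²` finite, and since the residual `‖T f_k - f_k‖` is
non-increasing while `∑ λ_k (1 - λ_k) = ∞`, the residual tends to `0`. By Banach–Alaoglu the
bounded sequence has weak limits along ultrafilters; such a limit lies in the weakly closed set
`D` and, by Browder's demiclosedness principle, is a fixed point. Opial's argument finishes:
two weak cluster points `p, q` in `Fix T` satisfy `⟪p - q, p - q⟫ = 0`, because
`⟪f_k, p - q⟫` is an affine combination of the convergent sequences `‖f_k - p‖²`, `‖f_k - q‖²`.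
-/

open Filter Topology
open scoped RealInnerProductSpace

theorem summable_of_add_le {d e : ℕ → ℝ} (hd : ∀ k, 0 ≤ d k) (he : ∀ k, 0 ≤ e k)
    (hde : ∀ k, d (k + 1) + e k ≤ d k) : Summable e := by
  have htel : ∀ n, ∑ k ∈ Finset.range n, e k + d n ≤ d 0 := fun n => by
    induction n with
    | zero => simp
    | succ n ih => rw [Finset.sum_range_succ]; linarith [hde n]
  exact summable_of_sum_range_le he fun n => by linarith [htel n, hd n]

theorem tendsto_zero_of_antitone_of_summable_mul {a r : ℕ → ℝ} (hr : Antitone r)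
    (hr₀ : ∀ k, 0 ≤ r k) (ha : ∀ k, 0 ≤ a k) (hdiv : ¬ Summable a)
    (hsum : Summable fun k => a k * r k) : Tendsto r atTop (𝓝 0) := by
  have hbdd : BddBelow (Set.range r) := ⟨0, Set.forall_mem_range.2 hr₀⟩
  suffices h : ⨅ k, r k = 0 by simpa only [h] using tendsto_atTop_ciInf hr hbdd
  refine le_antisymm ?_ (le_ciInf hr₀)
  by_contra! hpos
  refine hdiv ((summable_mul_right_iff hpos.ne').1 (hsum.of_nonneg_of_le
    (fun k => mul_nonneg (ha k) hpos.le) fun k => ?_))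
  exact mul_le_mul_of_nonneg_left (ciInf_le hbdd k) (ha k)

theorem norm_le_of_antitone_norm_sub {E : Type*} [SeminormedAddCommGroup E] {f : ℕ → E} {x : E}
    (h : Antitone fun n => ‖f n - x‖) (n : ℕ) : ‖f n‖ ≤ ‖f 0 - x‖ + ‖x‖ :=
  (norm_le_norm_sub_add _ _).trans (add_le_add_left (h n.zero_le) _)

section WeakConvergence

variable {ι H : Type*} [NormedAddCommGroup H] [InnerProductSpace ℝ H]

def WeakTendsto (f : ι → H) (l : Filter ι) (p : H) : Prop :=
  ∀ y, Tendsto (fun i => ⟪f i, y⟫) l (𝓝 ⟪p, y⟫)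

variable {f : ι → H} {l : Filter ι} {p : H}

theorem WeakTendsto.eq_of_tendsto_norm_sub {U V : Filter ι} [U.NeBot] [V.NeBot]
    (hU : U ≤ l) (hV : V ≤ l) {q : H} (hp : WeakTendsto f U p) (hq : WeakTendsto f V q)
    {a b : ℝ} (ha : Tendsto (fun i => ‖f i - p‖) l (𝓝 a))
    (hb : Tendsto (fun i => ‖f i - q‖) l (𝓝 b)) : p = q := by
  have hpolar : ∀ i, ⟪f i, p - q⟫ = (‖f i - q‖ ^ 2 - ‖f i - p‖ ^ 2 + ‖p‖ ^ 2 - ‖q‖ ^ 2) / 2 :=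
    fun i => by rw [norm_sub_sq_real, norm_sub_sq_real, inner_sub_right]; ring
  have hlim : Tendsto (fun i => ⟪f i, p - q⟫) l
      (𝓝 ((b ^ 2 - a ^ 2 + ‖p‖ ^ 2 - ‖q‖ ^ 2) / 2)) := by
    simp_rw [hpolar]
    exact ((((hb.pow 2).sub (ha.pow 2)).add_const _).sub_const _).div_const _
  have hpq : ⟪p, p - q⟫ = ⟪q, p - q⟫ :=
    (tendsto_nhds_unique (hp (p - q)) (hlim.mono_left hU)).trans
      (tendsto_nhds_unique (hq (p - q)) (hlim.mono_left hV)).symm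
  rwa [← sub_eq_zero, ← inner_sub_left, inner_self_eq_zero, sub_eq_zero] at hpq

variable [CompleteSpace H]

theorem WeakTendsto.tendsto_toWeakSpace (h : WeakTendsto f l p) :
    Tendsto (fun i => toWeakSpace ℝ H (f i)) l (𝓝 (toWeakSpace ℝ H p)) := by
  refine (IsInducing.induced (X := WeakSpace ℝ H)
    fun x φ => (topDualPairing ℝ H).flip x φ).tendsto_nhds_iff.2 <|
    tendsto_pi_nhds.2 fun φ => ?_
  have hφ := h ((InnerProductSpace.toDual ℝ H).symm φ)
  simp only [real_inner_comm ((InnerProductSpace.toDual ℝ H).symm φ),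
    InnerProductSpace.toDual_symm_apply] at hφ
  exact hφ

theorem WeakTendsto.mem_of_isClosed_of_convex [l.NeBot] (h : WeakTendsto f l p) {D : Set H}
    (hD : IsClosed D) (hconv : Convex ℝ D) (hf : ∀ᶠ i in l, f i ∈ D) : p ∈ D := by
  have hcl := mem_closure_of_tendsto h.tendsto_toWeakSpace
    (hf.mono fun i hi => Set.mem_image_of_mem _ hi)
  rw [← hconv.toWeakSpace_closure ℝ, hD.closure_eq] at hcl
  simpa using hcl

theorem exists_weakTendsto_of_norm_le (U : Ultrafilter ι) {M : ℝ} (hM : ∀ i, ‖f i‖ ≤ M) :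
    ∃ p, WeakTendsto f U p := by
  let g : ι → WeakDual ℝ H := fun i => StrongDual.toWeakDual (InnerProductSpace.toDual ℝ H (f i))
  have hg : (Ultrafilter.map g U : Filter (WeakDual ℝ H)) ≤
      𝓟 (WeakDual.toStrongDual ⁻¹' Metric.closedBall (0 : StrongDual ℝ H) M) :=
    tendsto_principal.2 (.of_forall fun i => by simpa [g] using hM i)
  obtain ⟨φ, -, hφ⟩ := (WeakDual.isCompact_closedBall 0 M).ultrafilter_le_nhds _ hg
  refine ⟨(InnerProductSpace.toDual ℝ H).symm (WeakDual.toStrongDual φ), fun y => ?_⟩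
  rw [InnerProductSpace.toDual_symm_apply]
  exact (tendsto_iff_forall_eval_tendsto_topDualPairing.1 hφ) y

/-- Opial's lemma. -/
theorem exists_weakTendsto_of_antitone_norm_sub {f : ℕ → H} {F : Set H} (hF : F.Nonempty)
    (hfejer : ∀ x ∈ F, Antitone fun n => ‖f n - x‖)
    (hcluster : ∀ (U : Ultrafilter ℕ) (p : H), (U : Filter ℕ) ≤ atTop →
      WeakTendsto f U p → p ∈ F) :
    ∃ p ∈ F, WeakTendsto f atTop p := by
  obtain ⟨x₀, hx₀⟩ := hF
  have hbdd := norm_le_of_antitone_norm_sub (hfejer x₀ hx₀)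
  have hdist : ∀ x ∈ F, ∃ a, Tendsto (fun n => ‖f n - x‖) atTop (𝓝 a) := fun x hx =>
    ⟨_, tendsto_atTop_ciInf (hfejer x hx) ⟨0, Set.forall_mem_range.2 fun _ => norm_nonneg _⟩⟩
  obtain ⟨p, hp⟩ := exists_weakTendsto_of_norm_le (Ultrafilter.of atTop) hbdd
  have hpF := hcluster _ p (Ultrafilter.of_le _) hp
  refine ⟨p, hpF, fun y => (tendsto_iff_ultrafilter _ _ _).2 fun V hV => ?_⟩
  obtain ⟨q, hq⟩ := exists_weakTendsto_of_norm_le V hbdd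
  obtain ⟨a, ha⟩ := hdist p hpF
  obtain ⟨b, hb⟩ := hdist q (hcluster V q hV hq)
  rw [hp.eq_of_tendsto_norm_sub (Ultrafilter.of_le _) hV hq ha hb]
  exact hq y

end WeakConvergence

section Nonexpansive

variable {E : Type*} [NormedAddCommGroup E] [NormedSpace ℝ E] {D : Set E} {T : E → E}

theorem norm_apply_add_smul_sub_sub_le (hT : ∀ x ∈ D, ∀ y ∈ D, ‖T x - T y‖ ≤ ‖x - y‖) {x : E}
    {t : ℝ} (hx : x ∈ D) (hx' : x + t • (T x - x) ∈ D) (ht₀ : 0 ≤ t) (ht₁ : t ≤ 1) :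
    ‖T (x + t • (T x - x)) - (x + t • (T x - x))‖ ≤ ‖T x - x‖ := by
  set z := x + t • (T x - x)
  calc ‖T z - z‖ = ‖(T z - T x) + (1 - t) • (T x - x)‖ := by congr 1; simp only [z]; module
    _ ≤ ‖T z - T x‖ + ‖(1 - t) • (T x - x)‖ := norm_add_le _ _
    _ ≤ ‖z - x‖ + (1 - t) * ‖T x - x‖ := by
      rw [norm_smul, Real.norm_of_nonneg (sub_nonneg.2 ht₁)]
      gcongr
      exact hT _ hx' _ hx
    _ = ‖T x - x‖ := by
      rw [add_sub_cancel_left, norm_smul, Real.norm_of_nonneg ht₀]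
      ring

theorem krasnoselskiiMann_mem (hconv : Convex ℝ D) (hmaps : Set.MapsTo T D D) {lam : ℕ → ℝ}
    (hlam : ∀ k, 0 ≤ lam k ∧ lam k ≤ 1) {f : ℕ → E} (hf0 : f 0 ∈ D)
    (hrec : ∀ k, f (k + 1) = f k + lam k • (T (f k) - f k)) (k : ℕ) : f k ∈ D := by
  induction k with
  | zero => exact hf0
  | succ k ih => rw [hrec]; exact hconv.add_smul_sub_mem ih (hmaps ih) (hlam k)

theorem krasnoselskiiMann_tendsto_norm_apply_sub
    (hT : ∀ x ∈ D, ∀ y ∈ D, ‖T x - T y‖ ≤ ‖x - y‖) {lam : ℕ → ℝ}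
    (hlam : ∀ k, 0 ≤ lam k ∧ lam k ≤ 1) (hdiv : ¬ Summable (fun k => lam k * (1 - lam k)))
    {f : ℕ → E} (hmem : ∀ k, f k ∈ D) (hrec : ∀ k, f (k + 1) = f k + lam k • (T (f k) - f k))
    {x₀ : E} (hstep : ∀ k,
      ‖f (k + 1) - x₀‖ ^ 2 + lam k * (1 - lam k) * ‖T (f k) - f k‖ ^ 2 ≤ ‖f k - x₀‖ ^ 2) :
    Tendsto (fun k => ‖T (f k) - f k‖) atTop (𝓝 0) := by
  have hw : ∀ k, 0 ≤ lam k * (1 - lam k) := fun k =>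
    mul_nonneg (hlam k).1 (sub_nonneg.2 (hlam k).2)
  have hanti : Antitone fun k => ‖T (f k) - f k‖ := antitone_nat_of_succ_le fun k => by
    rw [hrec]
    exact norm_apply_add_smul_sub_sub_le hT (hmem k) (hrec k ▸ hmem (k + 1)) (hlam k).1 (hlam k).2
  have hsq := tendsto_zero_of_antitone_of_summable_mul
    (fun m n hmn => pow_le_pow_left₀ (norm_nonneg _) (hanti hmn) 2) (fun k => sq_nonneg _) hw
    hdiv (summable_of_add_le (fun k => sq_nonneg ‖f k - x₀‖)
      (fun k => mul_nonneg (hw k) (sq_nonneg _)) hstep)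
  simpa [Real.sqrt_sq (norm_nonneg _)] using hsq.sqrt

end Nonexpansive

section Hilbert

variable {H : Type*} [NormedAddCommGroup H] [InnerProductSpace ℝ H] {D : Set H} {T : H → H}

theorem norm_add_smul_sub_sub_sq_add_le {x y p : H} (hyp : ‖y - p‖ ≤ ‖x - p‖) {t : ℝ}
    (ht : 0 ≤ t) : ‖x + t • (y - x) - p‖ ^ 2 + t * (1 - t) * ‖y - x‖ ^ 2 ≤ ‖x - p‖ ^ 2 := by
  set a := x - p
  set b := y - p
  have hab : y - x = b - a := by simp only [a, b, sub_sub_sub_cancel_right]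
  have hx : x + t • (y - x) - p = a + t • (b - a) := by rw [hab]; simp only [a]; abel
  have h₁ := norm_add_sq_real a (t • (b - a))
  have h₂ := norm_add_sq_real a (b - a)
  rw [add_sub_cancel] at h₂
  rw [inner_smul_right, norm_smul, mul_pow, Real.norm_eq_abs, sq_abs] at h₁
  have hb : ‖b‖ ^ 2 ≤ ‖a‖ ^ 2 := pow_le_pow_left₀ (norm_nonneg _) hyp 2
  rw [hx, hab, h₁]
  nlinarith [mul_le_mul_of_nonneg_left hb ht]

/-- Browder's demiclosedness principle. -/
theorem WeakTendsto.apply_eq_self {ι : Type*} {l : Filter ι} [l.NeBot] {f : ι → H} {p : H}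
    (hT : ∀ x ∈ D, ∀ y ∈ D, ‖T x - T y‖ ≤ ‖x - y‖) (hf : ∀ i, f i ∈ D) (hp : p ∈ D)
    {M : ℝ} (hM : ∀ i, ‖f i‖ ≤ M) (hweak : WeakTendsto f l p)
    (hres : Tendsto (fun i => ‖T (f i) - f i‖) l (𝓝 0)) : T p = p := by
  set e := p - T p
  have hexpand : ∀ i, ‖f i - T p‖ ^ 2 = ‖f i - p‖ ^ 2 + 2 * ⟪f i - p, e⟫ + ‖e‖ ^ 2 := fun i => by
    rw [← norm_add_sq_real, sub_add_sub_cancel]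
  have htriangle : ∀ i, ‖f i - T p‖ ≤ ‖T (f i) - f i‖ + ‖f i - p‖ := fun i =>
    calc ‖f i - T p‖ ≤ ‖f i - T (f i)‖ + ‖T (f i) - T p‖ := norm_sub_le_norm_sub_add_norm_sub _ _ _
      _ ≤ ‖T (f i) - f i‖ + ‖f i - p‖ := by rw [norm_sub_rev]; gcongr; exact hT _ (hf i) _ hp
  have hle : ∀ i, 2 * ⟪f i - p, e⟫ + ‖e‖ ^ 2 ≤
      ‖T (f i) - f i‖ ^ 2 + 2 * (‖T (f i) - f i‖ * ‖f i - p‖) := fun i => by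
    have := pow_le_pow_left₀ (norm_nonneg _) (htriangle i) 2
    nlinarith [hexpand i]
  have hlhs : Tendsto (fun i => 2 * ⟪f i - p, e⟫ + ‖e‖ ^ 2) l (𝓝 (‖e‖ ^ 2)) := by
    have : Tendsto (fun i => ⟪f i - p, e⟫) l (𝓝 0) := by
      simpa only [inner_sub_left, sub_self] using (hweak e).sub_const ⟪p, e⟫
    simpa using (this.const_mul 2).add_const (‖e‖ ^ 2)
  have hdist_bdd : IsBoundedUnder (· ≤ ·) l fun i => ‖‖f i - p‖‖ :=
    isBoundedUnder_of ⟨M + ‖p‖, fun i => by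
      simpa using (norm_sub_le (f i) p).trans (by linarith [hM i])⟩
  have hrhs : Tendsto (fun i => ‖T (f i) - f i‖ ^ 2 + 2 * (‖T (f i) - f i‖ * ‖f i - p‖)) l
      (𝓝 0) := by
    simpa using (hres.pow 2).add ((hres.zero_mul_isBoundedUnder_le hdist_bdd).const_mul 2)
  have he : ‖e‖ ^ 2 ≤ 0 := le_of_tendsto_of_tendsto hlhs hrhs (.of_forall hle)
  have he₀ : e = 0 := by simpa using le_antisymm he (sq_nonneg _)
  exact (sub_eq_zero.1 he₀).symm

end Hilbert

theorem krasnoselskii_mann_weak_convergence_general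
    {H : Type*} [NormedAddCommGroup H] [InnerProductSpace ℝ H] [CompleteSpace H]
    (D : Set H) (hclosed : IsClosed D) (hconv : Convex ℝ D)
    (T : H → H) (hmaps : Set.MapsTo T D D)
    (hnonexp : ∀ x ∈ D, ∀ y ∈ D, ‖T x - T y‖ ≤ ‖x - y‖)
    (hfix : ∃ x ∈ D, T x = x)
    (lam : ℕ → ℝ) (hlam : ∀ k, 0 ≤ lam k ∧ lam k ≤ 1)
    (hdiv : ¬ Summable (fun k => lam k * (1 - lam k)))
    (f : ℕ → H) (hf0 : f 0 ∈ D)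
    (hrec : ∀ k, f (k + 1) = f k + lam k • (T (f k) - f k)) :
    ∃ p ∈ D, T p = p ∧
      ∀ y : H, Filter.Tendsto (fun k => (inner ℝ (f k) y : ℝ)) Filter.atTop
        (nhds (inner ℝ p y : ℝ)) := by
  obtain ⟨x₀, hx₀⟩ := hfix
  have hmem := krasnoselskiiMann_mem hconv hmaps hlam hf0 hrec
  have hstep : ∀ p ∈ {p ∈ D | T p = p}, ∀ k,
      ‖f (k + 1) - p‖ ^ 2 + lam k * (1 - lam k) * ‖T (f k) - f k‖ ^ 2 ≤ ‖f k - p‖ ^ 2 := by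
    rintro p ⟨hpD, hTp⟩ k
    rw [hrec]
    refine norm_add_smul_sub_sub_sq_add_le ?_ (hlam k).1
    simpa only [hTp] using hnonexp _ (hmem k) _ hpD
  have hfejer : ∀ p ∈ {p ∈ D | T p = p}, Antitone fun k => ‖f k - p‖ := fun p hp =>
    antitone_nat_of_succ_le fun k => by
      have hw := mul_nonneg (mul_nonneg (hlam k).1 (sub_nonneg.2 (hlam k).2))
        (sq_nonneg ‖T (f k) - f k‖)
      exact (pow_le_pow_iff_left₀ (norm_nonneg _) (norm_nonneg _) two_ne_zero).1
        (by linarith [hstep p hp k])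
  have hres := krasnoselskiiMann_tendsto_norm_apply_sub hnonexp hlam hdiv hmem hrec
    (hstep x₀ hx₀)
  obtain ⟨p, ⟨hpD, hTp⟩, hp⟩ := exists_weakTendsto_of_antitone_norm_sub ⟨x₀, hx₀⟩ hfejer
    fun U q hU hq => by
      have hqD := hq.mem_of_isClosed_of_convex hclosed hconv (.of_forall hmem)
      exact ⟨hqD, hq.apply_eq_self hnonexp hmem hqD
        (norm_le_of_antitone_norm_sub (hfejer x₀ hx₀)) (hres.mono_left hU)⟩
  exact ⟨p, hpD, hTp, hp⟩

/-- **Krasnoselskii–Mann algorithm (Theorem 2, Appendix A).**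
Let `D` be a nonempty closed convex subset of a real Hilbert space `H`, and let
`T : D → D` be non-expansive with `Fix T ≠ ∅`.  If `λ_k ∈ [0,1]` with
`∑ λ_k (1-λ_k) = ∞` and `f₀ ∈ D`, then the sequence
`f_{k+1} = f_k + λ_k (T f_k - f_k)` converges weakly to a fixed point of `T`. -/
theorem krasnoselskii_mann_weak_convergence
    {H : Type*} [NormedAddCommGroup H] [InnerProductSpace ℝ H] [CompleteSpace H]
    (D : Set H) (hne : D.Nonempty) (hclosed : IsClosed D) (hconv : Convex ℝ D)
    (T : H → H) (hmaps : Set.MapsTo T D D)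
    (hnonexp : ∀ x ∈ D, ∀ y ∈ D, ‖T x - T y‖ ≤ ‖x - y‖)
    (hfix : ∃ x ∈ D, T x = x)
    (lam : ℕ → ℝ) (hlam : ∀ k, 0 ≤ lam k ∧ lam k ≤ 1)
    (hdiv : ¬ Summable (fun k => lam k * (1 - lam k)))
    (f : ℕ → H) (hf0 : f 0 ∈ D)
    (hrec : ∀ k, f (k + 1) = f k + lam k • (T (f k) - f k)) :
    ∃ p ∈ D, T p = p ∧
      ∀ y : H, Filter.Tendsto (fun k => (inner ℝ (f k) y : ℝ)) Filter.atTop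
        (nhds (inner ℝ p y : ℝ)) :=
  krasnoselskii_mann_weak_convergence_general D hclosed hconv T hmaps hnonexp hfix lam hlam hdiv f
    hf0 hrec
end

section
/- (Krasnoselskii–Mann algorithm in Euclidean space) Let D be a nonempty closed convex subset of ℝⁿ, and let T : D → D be a non-expansive operator whose fixed-point set Fix T = {x ∈ D : T(x) = x} is nonempty. Let (λ_k)_{k≥1} be a sequence in [0,1] with Σ_{k=1}^∞ λ_k(1−λ_k) = +∞, and let f₀ ∈ D. Then the sequence defined by f_{k+1} = f_k + λ_k (T(f_k) − f_k) converges (in norm) to a point in Fix T. -/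
open Filter Topology


lemma km_combo {E : Type*} [NormedAddCommGroup E] [InnerProductSpace ℝ E]
    (a b : E) (t : ℝ) :
    ‖(1-t)•a + t•b‖^2 = (1-t)*‖a‖^2 + t*‖b‖^2 - t*(1-t)*‖a-b‖^2 := by
  have h1 := norm_add_sq_real ((1-t)•a) (t•b)
  have h2 := norm_sub_sq_real a b
  rw [real_inner_smul_left, real_inner_smul_right] at h1
  rw [norm_smul, norm_smul] at h1
  simp only [Real.norm_eq_abs, mul_pow, sq_abs] at h1
  nlinarith [h1, h2]



/-- **Krasnoselskii–Mann algorithm in Euclidean space.**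
Let `D` be a nonempty closed convex subset of `ℝⁿ`, and let `T : D → D` be
non-expansive with `Fix T ≠ ∅`.  If `λ_k ∈ [0,1]` with `∑ λ_k (1-λ_k) = ∞` and
`f₀ ∈ D`, then the sequence `f_{k+1} = f_k + λ_k (T f_k - f_k)` converges in
norm to a fixed point of `T`. -/
theorem krasnoselskii_mann_euclidean_convergence
    (n : ℕ)
    (D : Set (EuclideanSpace ℝ (Fin n))) (hne : D.Nonempty)
    (hclosed : IsClosed D) (hconv : Convex ℝ D)
    (T : EuclideanSpace ℝ (Fin n) → EuclideanSpace ℝ (Fin n))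
    (hmaps : Set.MapsTo T D D)
    (hnonexp : ∀ x ∈ D, ∀ y ∈ D, ‖T x - T y‖ ≤ ‖x - y‖)
    (hfix : ∃ x ∈ D, T x = x)
    (lam : ℕ → ℝ) (hlam : ∀ k, 0 ≤ lam k ∧ lam k ≤ 1)
    (hdiv : ¬ Summable (fun k => lam k * (1 - lam k)))
    (f : ℕ → EuclideanSpace ℝ (Fin n)) (hf0 : f 0 ∈ D)
    (hrec : ∀ k, f (k + 1) = f k + lam k • (T (f k) - f k)) :
    ∃ p ∈ D, T p = p ∧ Filter.Tendsto f Filter.atTop (nhds p) := by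
  obtain ⟨p, hpD, hpfix⟩ := hfix
  -- membership
  have hcomb : ∀ k, f (k+1) = (1 - lam k) • f k + lam k • T (f k) := by
    intro k; rw [hrec]; module
  have hfD : ∀ k, f k ∈ D := by
    intro k; induction k with
    | zero => exact hf0
    | succ k ih =>
      rw [hcomb]
      exact hconv ih (hmaps ih) (by linarith [(hlam k).2]) (hlam k).1 (by ring)
  -- key Fejér inequality
  have key : ∀ q, q ∈ D → T q = q → ∀ k,
      ‖f (k+1) - q‖^2 ≤ ‖f k - q‖^2 - lam k*(1-lam k)*‖T (f k) - f k‖^2 := by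
    intro q hqD hqfix k
    have hd : f (k+1) - q = (1 - lam k) • (f k - q) + lam k • (T (f k) - q) := by
      rw [hcomb]; module
    have hb : ‖T (f k) - q‖ ≤ ‖f k - q‖ := by
      have := hnonexp (f k) (hfD k) q hqD
      rwa [hqfix] at this
    have habn : ‖(f k - q) - (T (f k) - q)‖ = ‖T (f k) - f k‖ := by
      rw [show (f k - q) - (T (f k) - q) = -(T (f k) - f k) by abel, norm_neg]
    have := km_combo (f k - q) (T (f k) - q) (lam k)
    rw [habn] at this
    rw [hd, this]
    have h1 := (hlam k).1
    have h2 := (hlam k).2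
    have hbb : ‖T (f k) - q‖^2 ≤ ‖f k - q‖^2 := pow_le_pow_left₀ (norm_nonneg _) hb 2
    nlinarith [mul_nonneg h1 (sub_nonneg.2 hbb)]
  -- norms antitone
  have hr_anti : ∀ q, q ∈ D → T q = q → Antitone (fun k => ‖f k - q‖) := by
    intro q hqD hqfix
    apply antitone_nat_of_succ_le
    intro k
    have := key q hqD hqfix k
    have h1 := (hlam k).1
    have h2 := (hlam k).2
    nlinarith [norm_nonneg (f (k+1) - q), norm_nonneg (f k - q), norm_nonneg (T (f k) - f k),
      mul_nonneg (mul_nonneg h1 (by linarith : (0:ℝ) ≤ 1 - lam k)) (sq_nonneg ‖T (f k) - f k‖)]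
  -- residual antitone
  set s : ℕ → ℝ := fun k => ‖T (f k) - f k‖ with hs
  have hs_anti : Antitone s := by
    apply antitone_nat_of_succ_le
    intro k
    have hd : T (f (k+1)) - f (k+1)
        = (T (f (k+1)) - T (f k)) + (1 - lam k) • (T (f k) - f k) := by
      rw [hrec]; module
    have h1 : ‖T (f (k+1)) - T (f k)‖ ≤ ‖f (k+1) - f k‖ :=
      hnonexp _ (hfD (k+1)) _ (hfD k)
    have h2 : ‖f (k+1) - f k‖ = lam k * ‖T (f k) - f k‖ := by
      rw [hrec]; simp [norm_smul, abs_of_nonneg (hlam k).1]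
    calc s (k+1) = ‖(T (f (k+1)) - T (f k)) + (1 - lam k) • (T (f k) - f k)‖ := by
          rw [hs]; simp only; rw [hd]
      _ ≤ ‖T (f (k+1)) - T (f k)‖ + ‖(1 - lam k) • (T (f k) - f k)‖ := norm_add_le _ _
      _ ≤ lam k * ‖T (f k) - f k‖ + (1 - lam k) * ‖T (f k) - f k‖ := by
          rw [norm_smul, Real.norm_eq_abs, abs_of_nonneg (by linarith [(hlam k).2])]
          linarith [h1, h2.le, h2.ge]
      _ = s k := by ring
  have hs_nonneg : ∀ k, 0 ≤ s k := fun k => norm_nonneg _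
  -- summability of lam(1-lam)s^2
  have hgsum : Summable (fun k => lam k * (1 - lam k) * s k ^ 2) := by
    apply summable_of_sum_range_le
      (c := ‖f 0 - p‖^2)
    · intro k
      exact mul_nonneg (mul_nonneg (hlam k).1 (by linarith [(hlam k).2])) (sq_nonneg _)
    · intro N
      have htel : ∀ N, (∑ k ∈ Finset.range N, lam k * (1 - lam k) * s k ^ 2)
          ≤ ‖f 0 - p‖^2 - ‖f N - p‖^2 := by
        intro N
        induction N with
        | zero => simp
        | succ N ih =>
          rw [Finset.sum_range_succ]
          have := key p hpD hpfix N
          simp only [hs] at *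
          nlinarith
      have := htel N
      nlinarith [sq_nonneg ‖f N - p‖]
  -- s tends to 0
  have hsL : Tendsto s atTop (𝓝 (⨅ k, s k)) :=
    tendsto_atTop_ciInf hs_anti ⟨0, fun x ⟨k, hk⟩ => hk ▸ hs_nonneg k⟩
  have hbdd : BddBelow (Set.range s) := ⟨0, fun x ⟨k, hk⟩ => hk ▸ hs_nonneg k⟩
  have hL0 : (⨅ k, s k) = 0 := by
    by_contra hL
    have hLpos : 0 < ⨅ k, s k := by
      rcases lt_or_eq_of_le (le_ciInf hs_nonneg) with h | h
      · exact h
      · exact absurd h.symm hL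
    set L := ⨅ k, s k
    apply hdiv
    have hsum2 : Summable (fun k => lam k * (1 - lam k) * L ^ 2) := by
      apply Summable.of_nonneg_of_le
        (fun k => mul_nonneg (mul_nonneg (hlam k).1 (by linarith [(hlam k).2])) (sq_nonneg _))
        (fun k => ?_) hgsum
      have hLle : L ≤ s k := ciInf_le hbdd k
      have hnn := mul_nonneg (hlam k).1 (by linarith [(hlam k).2] : (0:ℝ) ≤ 1 - lam k)
      exact mul_le_mul_of_nonneg_left (pow_le_pow_left₀ hLpos.le hLle 2) hnn
    have := hsum2.mul_right (L^2)⁻¹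
    apply this.congr
    intro k
    field_simp
  rw [hL0] at hsL
  -- f is bounded
  have hball : ∀ k, f k ∈ Metric.closedBall p ‖f 0 - p‖ := by
    intro k
    rw [Metric.mem_closedBall, dist_eq_norm]
    exact hr_anti p hpD hpfix (Nat.zero_le k)
  obtain ⟨q, hq_mem, φ, hφ, hφt⟩ := tendsto_subseq_of_bounded
    Metric.isBounded_closedBall hball
  have hqD : q ∈ D :=
    hclosed.mem_of_tendsto hφt (Eventually.of_forall fun j => hfD (φ j))
  -- T q = q
  have hTf : Tendsto (fun j => T (f (φ j))) atTop (𝓝 (T q)) := by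
    rw [tendsto_iff_norm_sub_tendsto_zero]
    apply squeeze_zero (fun j => norm_nonneg _) (fun j => hnonexp _ (hfD (φ j)) q hqD)
    rw [← tendsto_iff_norm_sub_tendsto_zero]
    exact hφt
  have hTf2 : Tendsto (fun j => T (f (φ j))) atTop (𝓝 q) := by
    have h1 : Tendsto (fun j => T (f (φ j)) - f (φ j)) atTop (𝓝 0) := by
      rw [tendsto_zero_iff_norm_tendsto_zero]
      exact hsL.comp hφ.tendsto_atTop
    have := h1.add hφt
    simpa using this
  have hqfix : T q = q := tendsto_nhds_unique hTf hTf2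
  refine ⟨q, hqD, hqfix, ?_⟩
  -- final convergence
  rw [tendsto_iff_norm_sub_tendsto_zero]
  set r : ℕ → ℝ := fun k => ‖f k - q‖ with hrdef
  have hr_a : Antitone r := hr_anti q hqD hqfix
  have hrφ : Tendsto (fun j => r (φ j)) atTop (𝓝 0) := by
    have := (tendsto_iff_norm_sub_tendsto_zero).mp hφt
    exact this
  have hrbdd : BddBelow (Set.range r) := ⟨0, fun x ⟨k, hk⟩ => hk ▸ norm_nonneg _⟩
  have hrt : Tendsto r atTop (𝓝 (⨅ k, r k)) := tendsto_atTop_ciInf hr_a hrbdd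
  have hinf0 : (⨅ k, r k) = 0 := by
    have h1 : (⨅ k, r k) ≤ 0 :=
      ge_of_tendsto hrφ (Eventually.of_forall fun j => ciInf_le hrbdd (φ j))
    have h2 : 0 ≤ ⨅ k, r k := le_ciInf (fun k => norm_nonneg _)
    linarith
  rw [hinf0] at hrt
  exact hrt
end

section
/- (Single-layer perfect reconstruction) Let filters ψ₁,…,ψ_q and dual filters ψ̃₁,…,ψ̃_q in ℝ^d satisfy the frame condition Σ_{k=1}^{q} ψ_k ψ̃_kᵀ = I_d (the d × d identity matrix). Then every signal f ∈ ℝⁿ is perfectly reconstructed by the encoder–decoder pair: f = (1/d) · Σ_{k=1}^{q} (f ⊛ ψ̄_k) ⊛ ψ̃_k, i.e., for every index i, f[i] = (1/d) · Σ_{k=1}^{q} Σ_{j=1}^{d} c_k[i−j+1] · ψ̃_k[j], where c_k[i] = Σ_{l=1}^{d} f[i+l−1] · ψ_k[l] and all signal indices are taken modulo n. -/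
/-- Encoder (circular) convolution `f ⊛ ψ̄` of a signal `f ∈ ℝⁿ` (indexed by
`ℤ/nℤ`) with a filter `ψ ∈ ℝ^d`: `(f ⊛ ψ̄)[i] = ∑_j f[i+j]·ψ[j]` (0-based). -/
def encConv {n d : ℕ} (f : ZMod n → ℝ) (ψ : Fin d → ℝ) : ZMod n → ℝ :=
  fun i => ∑ j : Fin d, f (i + ((j : ℕ) : ZMod n)) * ψ j

/-- Decoder (circular) convolution `c ⊛ ψ̃`:  `(c ⊛ ψ̃)[i] = ∑_j c[i−j]·ψ̃[j]`. -/
def decConv {n d : ℕ} (c : ZMod n → ℝ) (ψt : Fin d → ℝ) : ZMod n → ℝ :=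
  fun i => ∑ j : Fin d, c (i - ((j : ℕ) : ZMod n)) * ψt j

/-- **Single-layer perfect reconstruction.**  If the filters `ψ_k` and dual
filters `ψ̃_k` satisfy the frame condition `∑_k ψ_k ψ̃_kᵀ = I_d`, then every
signal `f ∈ ℝⁿ` satisfies `f = (1/d) ∑_k (f ⊛ ψ̄_k) ⊛ ψ̃_k`. -/
theorem single_layer_perfect_reconstruction
    (n d q : ℕ) [NeZero n] (hd : 1 ≤ d) (hdn : d ≤ n)
    (ψ ψt : Fin q → Fin d → ℝ)
    (hframe : ∀ l m : Fin d,
      ∑ k : Fin q, ψ k l * ψt k m = if l = m then 1 else 0)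
    (f : ZMod n → ℝ) :
    ∀ i : ZMod n,
      f i = (1 / (d : ℝ)) * ∑ k : Fin q, decConv (encConv f (ψ k)) (ψt k) i := by
  intro i
  have hd0 : (d : ℝ) ≠ 0 := Nat.cast_ne_zero.mpr (by omega)
  have key : ∑ k : Fin q, decConv (encConv f (ψ k)) (ψt k) i = d * f i := by
    simp only [decConv, encConv, Finset.sum_mul]
    rw [Finset.sum_comm]
    have : ∀ j : Fin d,
        ∑ k : Fin q, ∑ l : Fin d,
          f (i - ((j : ℕ) : ZMod n) + ((l : ℕ) : ZMod n)) * ψ k l * ψt k j = f i := by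
      intro j
      rw [Finset.sum_comm]
      have : ∀ l : Fin d,
          ∑ k : Fin q, f (i - ((j : ℕ) : ZMod n) + ((l : ℕ) : ZMod n)) * ψ k l * ψt k j
          = f (i - ((j : ℕ) : ZMod n) + ((l : ℕ) : ZMod n)) * (if l = j then 1 else 0) := by
        intro l
        rw [← hframe l j, Finset.mul_sum]
        simp [mul_assoc]
      simp only [this, mul_ite, mul_one, mul_zero]
      simp
    simp only [this]
    simp [mul_comm]
  rw [key]
  field_simp
end

section
/- (Perfect reconstruction with generalized pooling) Let Φ, Φ̃ ∈ ℝ^{n×n} satisfy Φ̃Φᵀ = I_n, and let filters ψ₁,…,ψ_q and dual filters ψ̃₁,…,ψ̃_q in ℝ^d satisfy Σ_{k=1}^{q} ψ_k ψ̃_kᵀ = I_d. Then every signal f ∈ ℝⁿ satisfies f = (1/d) · Σ_{k=1}^{q} ( Φ̃ Φᵀ (f ⊛ ψ̄_k) ) ⊛ ψ̃_k, where Φᵀ(f ⊛ ψ̄_k) are the framelet coefficients of the k-th channel and all signal indices are taken modulo n. -/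
/-- **Perfect reconstruction with generalized pooling.**  If `Φ̃ Φᵀ = I_n` and
`∑_k ψ_k ψ̃_kᵀ = I_d`, then every `f ∈ ℝⁿ` satisfies
`f = (1/d) ∑_k (Φ̃ Φᵀ (f ⊛ ψ̄_k)) ⊛ ψ̃_k`. -/
theorem perfect_reconstruction_with_pooling
    (n d q : ℕ) [NeZero n] (hd : 1 ≤ d) (hdn : d ≤ n)
    (Φ Φt : Matrix (ZMod n) (ZMod n) ℝ)
    (hpool : Φt * Φ.transpose = 1)
    (ψ ψt : Fin q → Fin d → ℝ)
    (hframe : ∀ l m : Fin d,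
      ∑ k : Fin q, ψ k l * ψt k m = if l = m then 1 else 0)
    (f : ZMod n → ℝ) :
    ∀ i : ZMod n,
      f i = (1 / (d : ℝ)) *
        ∑ k : Fin q,
          decConv (Φt.mulVec (Φ.transpose.mulVec (encConv f (ψ k)))) (ψt k) i := by
  intro i
  have h1 : ∀ v : ZMod n → ℝ, Φt.mulVec (Φ.transpose.mulVec v) = v := by
    intro v; rw [Matrix.mulVec_mulVec, hpool, Matrix.one_mulVec]
  simp only [h1, decConv, encConv, Finset.sum_mul]
  have key : ∑ k : Fin q, ∑ j : Fin d, ∑ l : Fin d,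
      f (i - ((j : ℕ) : ZMod n) + ((l : ℕ) : ZMod n)) * ψ k l * ψt k j
      = (d : ℝ) * f i := by
    rw [Finset.sum_comm]
    have : ∀ j : Fin d, ∑ k : Fin q, ∑ l : Fin d,
        f (i - ((j : ℕ) : ZMod n) + ((l : ℕ) : ZMod n)) * ψ k l * ψt k j = f i := by
      intro j
      rw [Finset.sum_comm]
      have h2 : ∀ l : Fin d, ∑ k : Fin q,
          f (i - ((j : ℕ) : ZMod n) + ((l : ℕ) : ZMod n)) * ψ k l * ψt k j
          = f (i - ((j : ℕ) : ZMod n) + ((l : ℕ) : ZMod n)) * (if l = j then 1 else 0) := by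
        intro l
        rw [← hframe l j, Finset.mul_sum]
        congr 1; ext k; ring
      simp only [h2, mul_ite, mul_one, mul_zero, Finset.sum_ite_eq', Finset.mem_univ, if_true]
      congr 1
      abel
    simp [this, Finset.card_univ]
  rw [key]
  have hd' : (d : ℝ) ≠ 0 := by positivity
  field_simp
end

section
/- (Multi-channel perfect reconstruction) Let f₁,…,f_p ∈ ℝⁿ be input channels, and for k = 1,…,q and j = 1,…,p let ψ_k^j ∈ ℝ^d be encoder filters and ψ̃_k^j ∈ ℝ^d be decoder filters. Assemble Ψ, Ψ̃ ∈ ℝ^{dp×q} whose k-th columns are the stacked vectors (ψ_k^1; …; ψ_k^p) and (ψ̃_k^1; …; ψ̃_k^p) respectively, and assume the frame condition Ψ Ψ̃ᵀ = I_{dp}. Define the multi-channel encoder outputs c_k := Σ_{j=1}^{p} f_j ⊛ ψ̄_k^j ∈ ℝⁿ for k = 1,…,q. Then every input channel is perfectly reconstructed: for each j = 1,…,p, f_j = (1/d) · Σ_{k=1}^{q} c_k ⊛ ψ̃_k^j. -/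
/-- **Multi-channel perfect reconstruction.**  With `p` input channels `f_j`,
encoder filters `ψ_k^j` and decoder filters `ψ̃_k^j` (`k = 1,…,q`) satisfying the
frame condition `Ψ Ψ̃ᵀ = I_{dp}`, the multi-channel encoder outputs
`c_k = ∑_j f_j ⊛ ψ̄_k^j` perfectly reconstruct every input channel:
`f_j = (1/d) ∑_k c_k ⊛ ψ̃_k^j`. -/
theorem multichannel_perfect_reconstruction
    (n d p q : ℕ) [NeZero n] (hd : 1 ≤ d) (hdn : d ≤ n)
    (f : Fin p → ZMod n → ℝ)
    (ψ ψt : Fin q → Fin p → Fin d → ℝ)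
    (hframe : ∀ (j' j : Fin p) (l m : Fin d),
      ∑ k : Fin q, ψ k j' l * ψt k j m = if j' = j ∧ l = m then 1 else 0) :
    ∀ (j : Fin p) (i : ZMod n),
      f j i = (1 / (d : ℝ)) *
        ∑ k : Fin q,
          decConv (fun i' => ∑ j' : Fin p, encConv (f j') (ψ k j') i') (ψt k j) i := by
  intro j i
  have hd0 : (d : ℝ) ≠ 0 := Nat.cast_ne_zero.mpr (by omega)
  have key : ∑ k : Fin q,
      decConv (fun i' => ∑ j' : Fin p, encConv (f j') (ψ k j') i') (ψt k j) i
      = (d : ℝ) * f j i := by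
    simp only [decConv, encConv]
    rw [Finset.sum_comm]
    have hm : ∀ m : Fin d,
        ∑ k : Fin q,
          (∑ j' : Fin p, ∑ l : Fin d,
            f j' (i - ((m : ℕ) : ZMod n) + ((l : ℕ) : ZMod n)) * ψ k j' l) * ψt k j m
        = f j i := by
      intro m
      have : ∑ k : Fin q,
          (∑ j' : Fin p, ∑ l : Fin d,
            f j' (i - ((m : ℕ) : ZMod n) + ((l : ℕ) : ZMod n)) * ψ k j' l) * ψt k j m
          = ∑ j' : Fin p, ∑ l : Fin d,
            f j' (i - ((m : ℕ) : ZMod n) + ((l : ℕ) : ZMod n)) *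
              ∑ k : Fin q, ψ k j' l * ψt k j m := by
        simp_rw [Finset.sum_mul, mul_assoc, Finset.mul_sum]
        rw [Finset.sum_comm]
        exact Finset.sum_congr rfl fun j' _ => Finset.sum_comm
      rw [this]
      simp_rw [hframe]
      simp [ite_and, Finset.sum_ite_eq', Finset.sum_ite_eq, sub_add_cancel]
    calc ∑ m : Fin d, ∑ k : Fin q,
          (∑ j' : Fin p, ∑ l : Fin d,
            f j' (i - ((m : ℕ) : ZMod n) + ((l : ℕ) : ZMod n)) * ψ k j' l) * ψt k j m
        = ∑ m : Fin d, f j i := Finset.sum_congr rfl fun m _ => hm m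
      _ = (d : ℝ) * f j i := by simp [Finset.sum_const, mul_comm]
  rw [key]; field_simp
end

section
/- (Reconstruction under a Hankel-invariant projection) Let f ∈ ℝⁿ and let ψ₁,…,ψ_r, ψ̃₁,…,ψ̃_r ∈ ℝ^d be such that the matrix P := Σ_{k=1}^{r} ψ_k ψ̃_kᵀ ∈ ℝ^{d×d} satisfies H_d(f) · P = H_d(f). Then f = (1/d) · Σ_{k=1}^{r} (f ⊛ ψ̄_k) ⊛ ψ̃_k. -/
/-- Wrap-around Hankel matrix `H_d(f) ∈ ℝ^{n×d}`, `H_d(f)[i,j] = f[i+j]`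
(0-based, indices modulo `n`). -/
def hankel {n : ℕ} (d : ℕ) (f : ZMod n → ℝ) : Matrix (ZMod n) (Fin d) ℝ :=
  Matrix.of fun i j => f (i + ((j : ℕ) : ZMod n))

/-- **Reconstruction under a Hankel-invariant projection.**  If the matrix
`P = ∑_k ψ_k ψ̃_kᵀ ∈ ℝ^{d×d}` satisfies `H_d(f) P = H_d(f)`, then
`f = (1/d) ∑_k (f ⊛ ψ̄_k) ⊛ ψ̃_k`. -/
theorem reconstruction_hankel_invariant_projection
    (n d r : ℕ) [NeZero n] (hd : 1 ≤ d) (hdn : d ≤ n)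
    (ψ ψt : Fin r → Fin d → ℝ)
    (f : ZMod n → ℝ)
    (hproj : hankel d f *
        (Matrix.of fun l m : Fin d => ∑ k : Fin r, ψ k l * ψt k m) = hankel d f) :
    ∀ i : ZMod n,
      f i = (1 / (d : ℝ)) * ∑ k : Fin r, decConv (encConv f (ψ k)) (ψt k) i := by
  intro i
  have key : ∀ m : Fin d, ∑ j : Fin d,
      f (i - ((m : ℕ) : ZMod n) + ((j : ℕ) : ZMod n)) * (∑ k : Fin r, ψ k j * ψt k m)
      = f i := by
    intro m
    have := congrFun (congrFun hproj (i - ((m : ℕ) : ZMod n))) m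
    simpa [Matrix.mul_apply, hankel] using this
  have hsum : ∑ k : Fin r, decConv (encConv f (ψ k)) (ψt k) i = (d : ℝ) * f i := by
    have : ∑ k : Fin r, decConv (encConv f (ψ k)) (ψt k) i
        = ∑ m : Fin d, ∑ j : Fin d,
            f (i - ((m : ℕ) : ZMod n) + ((j : ℕ) : ZMod n)) *
              (∑ k : Fin r, ψ k j * ψt k m) := by
      simp only [decConv, encConv, Finset.sum_mul, Finset.mul_sum]
      rw [Finset.sum_comm]
      refine Finset.sum_congr rfl fun m _ => ?_
      rw [Finset.sum_comm]
      refine Finset.sum_congr rfl fun j _ => ?_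
      refine Finset.sum_congr rfl fun k _ => ?_
      ring
    rw [this]
    simp [key, Finset.sum_const, mul_comm]
  rw [hsum]
  have hd0 : (d : ℝ) ≠ 0 := by positivity
  field_simp
end
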